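/- arXiv:1404.1274 — 7 statements merged into one kernel-verified Lean document; each statement's English description precedes it below -/
import Mathlib

section
/- For every natural number m ≥ 1, the polynomial x^3 - m x^2 - m x - m has exactly one real root β with β > 1, and this root satisfies m < β < m + 1. -/
/-!
Write the equation as `β² (β - a) = a (β + 1)`. For `a > 0` the right side is positive, so a
positive root exceeds `a`; and `β ≥ a + 1` is impossible because then
`a (β + 1) ≤ β² - 1 < β² ≤ β² (β - a)`. The sign change from `-a (a + 1)` at `a` to `1` at
`a + 1` gives a root in between, and two roots `β, γ > 1` coincide because the cofactor
`γ (γ - a) + β (β - a) + (γ β - a)` of `γ - β` in the difference of the two equations is positive.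
-/

theorem lt_of_cubic_eq_zero {a β : ℝ} (ha : 0 < a) (hβ : 0 < β)
    (h : β ^ 3 - a * β ^ 2 - a * β - a = 0) : a < β := by
  by_contra! hle
  nlinarith [mul_nonneg (sq_nonneg β) (sub_nonneg.mpr hle)]

theorem lt_add_one_of_cubic_eq_zero {a β : ℝ} (hβ : -1 ≤ β)
    (h : β ^ 3 - a * β ^ 2 - a * β - a = 0) : β < a + 1 := by
  by_contra! hle
  nlinarith [mul_le_mul_of_nonneg_left (le_sub_iff_add_le.mpr hle) (sq_nonneg β),
    mul_le_mul_of_nonneg_right (le_sub_iff_add_le'.mpr hle) (neg_le_iff_add_nonneg.mp hβ)]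

theorem cubic_root_unique_of_one_lt {a β γ : ℝ} (ha : 0 < a) (hβ : 1 < β) (hγ : 1 < γ)
    (hβ0 : β ^ 3 - a * β ^ 2 - a * β - a = 0) (hγ0 : γ ^ 3 - a * γ ^ 2 - a * γ - a = 0) :
    γ = β := by
  have haβ := lt_of_cubic_eq_zero ha (by linarith) hβ0
  have haγ := lt_of_cubic_eq_zero ha (by linarith) hγ0
  have hcofactor : 0 < γ ^ 2 + γ * β + β ^ 2 - a * (γ + β) - a := by
    have hγβ : a < γ * β := by nlinarith
    nlinarith [mul_pos (sub_pos.mpr haγ) (by linarith : (0 : ℝ) < γ),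
      mul_pos (sub_pos.mpr haβ) (by linarith : (0 : ℝ) < β)]
  have hfactor : (γ - β) * (γ ^ 2 + γ * β + β ^ 2 - a * (γ + β) - a) = 0 := by
    linear_combination hγ0 - hβ0
  linarith [(mul_eq_zero.mp hfactor).resolve_right hcofactor.ne']

theorem exists_cubic_root_mem_Ioo {a : ℝ} (ha : 0 < a) :
    ∃ β ∈ Set.Ioo a (a + 1), β ^ 3 - a * β ^ 2 - a * β - a = 0 := by
  have hcont : ContinuousOn (fun x : ℝ => x ^ 3 - a * x ^ 2 - a * x - a) (Set.Icc a (a + 1)) := by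
    fun_prop
  have hsign : (0 : ℝ) ∈ Set.Ioo (a ^ 3 - a * a ^ 2 - a * a - a)
      ((a + 1) ^ 3 - a * (a + 1) ^ 2 - a * (a + 1) - a) := by
    constructor <;> nlinarith
  exact intermediate_value_Ioo (by linarith) hcont hsign

theorem stmt_1 (m : ℕ) (hm : 1 ≤ m) :
    (∃! β : ℝ, 1 < β ∧ β ^ 3 - m * β ^ 2 - m * β - m = 0) ∧
    (∀ β : ℝ, 1 < β → β ^ 3 - m * β ^ 2 - m * β - m = 0 →
      (m : ℝ) < β ∧ β < m + 1) := by
  have hm' : (1 : ℝ) ≤ m := by exact_mod_cast hm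
  refine ⟨?_, fun β hβ h0 =>
    ⟨lt_of_cubic_eq_zero (by linarith) (by linarith) h0,
      lt_add_one_of_cubic_eq_zero (by linarith) h0⟩⟩
  obtain ⟨β, hβ, hβ0⟩ := exists_cubic_root_mem_Ioo (a := (m : ℝ)) (by linarith)
  have hβ1 : 1 < β := hm'.trans_lt hβ.1
  exact ⟨β, ⟨hβ1, hβ0⟩, fun γ ⟨hγ1, hγ0⟩ =>
    cubic_root_unique_of_one_lt (by linarith) hβ1 hγ1 hβ0 hγ0⟩
end

section
/- Let β > 1 be the real root of x^3 - m x^2 - m x - m for a positive integer m, and let ℓ = -β/(β+1). Then the Ito–Sadahiro (-β)-expansion of ℓ is d_{-β}(ℓ) = m 0 m m m m ⋯ (the digit m, then 0, then m repeated forever); equivalently, T_{-β}(ℓ) = -βℓ - m lies in [ℓ, ℓ+1), T_{-β}^2(ℓ) satisfies the digit 0, and T_{-β}^n(ℓ) = T_{-β}^2(ℓ) for all n ≥ 2 with digit m. -/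
/-!
Every digit claim reduces to a membership in the domain: `⌊y - ℓ⌋ = d` exactly when
`y - d ∈ [ℓ, ℓ + 1)`. The cubic gives `m < β < m + 1`, which puts both `-βℓ - m` and the fixed point
`p = -m/(β+1)` of `x ↦ -βx - m` in `[ℓ, ℓ + 1)`; moreover the cubic is precisely the identity
`-β(-βℓ - m) = p`, so the orbit of `ℓ` is `ℓ, -βℓ - m, p, p, …` with digits `m, 0, m, m, …`.
-/

open Set

theorem floor_sub_eq_iff_sub_mem_Ico (y ℓ : ℝ) (d : ℤ) :
    ⌊y - ℓ⌋ = d ↔ y - d ∈ Ico ℓ (ℓ + 1) := by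
  rw [Int.floor_eq_iff, mem_Ico]
  constructor <;> rintro ⟨h₁, h₂⟩ <;> constructor <;> linarith

section CubicRoot

variable {m β : ℝ} (hm : 0 < m) (hβ : 0 < β) (hroot : β ^ 3 - m * β ^ 2 - m * β - m = 0)
include hm hβ hroot

theorem lt_of_cubic_root : m < β := by
  have h : β ^ 2 * (β - m) = m * (β + 1) := by linear_combination hroot
  nlinarith [mul_pos hβ hβ]

theorem lt_add_one_of_cubic_root : β < m + 1 := by
  have hmβ := lt_of_cubic_root hm hβ hroot
  have h : β * (β ^ 2 - m * β - m) = m := by linear_combination hroot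
  nlinarith

end CubicRoot

section Domain

variable {m β ℓ : ℝ} (hβ : 0 ≤ β) (hℓ : ℓ = -β / (β + 1))
include hβ hℓ

theorem neg_mul_sub_mem_Ico (hmβ : m ≤ β) (hβm : β < m + 1) :
    -β * ℓ - m ∈ Ico ℓ (ℓ + 1) := by
  subst hℓ
  have hβ1 : 0 < β + 1 := by linarith
  constructor
  · rw [div_le_iff₀ hβ1]; field_simp; nlinarith
  · rw [← sub_pos]; field_simp; nlinarith

theorem neg_div_add_one_mem_Ico (hm : 0 ≤ m) (hmβ : m ≤ β) :
    -m / (β + 1) ∈ Ico ℓ (ℓ + 1) := by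
  subst hℓ
  have hβ1 : 0 < β + 1 := by linarith
  constructor
  · rw [div_le_div_iff_of_pos_right hβ1]; linarith
  · rw [div_add_one hβ1.ne', div_lt_div_iff_of_pos_right hβ1]; linarith

end Domain

theorem neg_mul_neg_div_add_one_sub {m β : ℝ} (hβ : β + 1 ≠ 0) :
    -β * (-m / (β + 1)) - m = -m / (β + 1) := by
  field_simp; ring

theorem neg_mul_neg_mul_sub_of_cubic_root {m β ℓ : ℝ} (hβ : β + 1 ≠ 0) (hℓ : ℓ = -β / (β + 1))
    (hroot : β ^ 3 - m * β ^ 2 - m * β - m = 0) :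
    -β * (-β * ℓ - m) = -m / (β + 1) := by
  subst hℓ
  field_simp
  linear_combination -hroot

theorem digit_eq_and_apply_eq_of_mem_Ico {β ℓ : ℝ} {T : ℝ → ℝ}
    (hT : ∀ x, T x = -β * x - ⌊-β * x - ℓ⌋) {x : ℝ} {d : ℤ}
    (h : -β * x - d ∈ Ico ℓ (ℓ + 1)) : ⌊-β * x - ℓ⌋ = d ∧ T x = -β * x - d := by
  have hd := (floor_sub_eq_iff_sub_mem_Ico _ _ _).2 h
  exact ⟨hd, by rw [hT, hd]⟩

theorem stmt_4 (m : ℕ) (hm : 1 ≤ m) (β : ℝ) (hβ : 1 < β)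
    (hroot : β ^ 3 - m * β ^ 2 - m * β - m = 0)
    (ℓ : ℝ) (hℓ : ℓ = -β / (β + 1))
    (T : ℝ → ℝ) (hT : ∀ x, T x = -β * x - ⌊-β * x - ℓ⌋) :
    ⌊-β * ℓ - ℓ⌋ = (m : ℤ) ∧
    T ℓ = -β * ℓ - m ∧ T ℓ ∈ Set.Ico ℓ (ℓ + 1) ∧
    ⌊-β * T ℓ - ℓ⌋ = 0 ∧
    (∀ n : ℕ, 2 ≤ n → T^[n] ℓ = T^[2] ℓ ∧ ⌊-β * T^[n] ℓ - ℓ⌋ = (m : ℤ)) := by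
  have hβ0 : 0 < β := by linarith
  have hm0 : (0 : ℝ) < m := by exact_mod_cast hm
  have hmβ := lt_of_cubic_root hm0 hβ0 hroot
  have hβm := lt_add_one_of_cubic_root hm0 hβ0 hroot
  have hβ1 : β + 1 ≠ 0 := by linarith
  have hp := neg_div_add_one_mem_Ico hβ0.le hℓ hm0.le hmβ.le
  set p : ℝ := -m / (β + 1)
  have hx₁ : -β * ℓ - ((m : ℤ) : ℝ) ∈ Ico ℓ (ℓ + 1) := by
    simpa using neg_mul_sub_mem_Ico hβ0.le hℓ hmβ.le hβm
  obtain ⟨hd₁, hT₁⟩ := digit_eq_and_apply_eq_of_mem_Ico hT hx₁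
  rw [Int.cast_natCast] at hT₁
  have hx₂ : -β * T ℓ - ((0 : ℤ) : ℝ) = p := by
    rw [hT₁, Int.cast_zero, sub_zero, neg_mul_neg_mul_sub_of_cubic_root hβ1 hℓ hroot]
  have hxp : -β * p - ((m : ℤ) : ℝ) = p := by
    rw [Int.cast_natCast, neg_mul_neg_div_add_one_sub hβ1]
  obtain ⟨hd₂, hT₂⟩ := digit_eq_and_apply_eq_of_mem_Ico hT (hx₂ ▸ hp)
  obtain ⟨hdp, hTp⟩ := digit_eq_and_apply_eq_of_mem_Ico hT (hxp ▸ hp)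
  rw [hx₂] at hT₂
  rw [hxp] at hTp
  have horbit (k : ℕ) : T^[k + 2] ℓ = p := by
    rw [Function.iterate_add_apply, show T^[2] ℓ = p from hT₂, Function.iterate_fixed hTp]
  refine ⟨hd₁, hT₁, hT₁ ▸ hx₁, hd₂, fun n hn => ?_⟩
  obtain ⟨k, rfl⟩ := Nat.exists_eq_add_of_le' hn
  rw [horbit, horbit 0]
  exact ⟨rfl, hdp⟩
end

section
/- Let γ be the real root of x^3 - x^2 - x - 1 with γ > 1. For every integer m ≥ 0, the value in base (-γ) of the digit string 1 1 (-1) 0 (-1) (1 0 1 (-1) 0 (-1))^m 1 (-1) is 0, i.e. Σ_i d_i (-γ)^i = 0, where the digit string d (read left to right, most significant digit first) is 11(-1)0(-1), followed by m copies of 101(-1)0(-1), followed by 1(-1). -/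
noncomputable def bval (γ : ℝ) (L : List ℤ) : ℝ :=
  ∑ i ∈ Finset.range L.length, (L.getD i 0 : ℝ) * (-γ) ^ (L.length - 1 - i)

lemma bval_nil (γ : ℝ) : bval γ [] = 0 := by simp [bval]

lemma bval_cons (γ : ℝ) (d : ℤ) (L : List ℤ) :
    bval γ (d :: L) = (d : ℝ) * (-γ) ^ L.length + bval γ L := by
  unfold bval
  rw [List.length_cons, Finset.sum_range_succ']
  have h : ∀ i ∈ Finset.range L.length,
      ((d :: L).getD (i + 1) 0 : ℝ) * (-γ) ^ (L.length + 1 - 1 - (i + 1))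
        = (L.getD i 0 : ℝ) * (-γ) ^ (L.length - 1 - i) := by
    intro i _
    rw [List.getD_cons_succ, show L.length + 1 - 1 - (i + 1) = L.length - 1 - i from by omega]
  rw [Finset.sum_congr rfl h]
  simp [add_comm]

lemma bval_append (γ : ℝ) (A B : List ℤ) :
    bval γ (A ++ B) = bval γ A * (-γ) ^ B.length + bval γ B := by
  induction A with
  | nil => simp [bval_nil]
  | cons d A ih =>
      rw [List.cons_append, bval_cons, bval_cons, ih, List.length_append, pow_add]
      ring

lemma bval_R (γ : ℝ) (hroot : γ ^ 3 - γ ^ 2 - γ - 1 = 0) (m : ℕ) :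
    bval γ ((List.replicate m [(1 : ℤ), 0, 1, -1, 0, -1]).flatten ++ [1, -1])
      = - bval γ [1, 1, -1, 0, -1] * (-γ) ^ (6 * m + 2) := by
  induction m with
  | zero =>
      simp [bval_cons, bval_nil]
      linear_combination (γ ^ 3 + 1) * hroot
  | succ n ih =>
      have hlen : ((List.replicate n [(1 : ℤ), 0, 1, -1, 0, -1]).flatten ++ [(1:ℤ), -1]).length
          = 6 * n + 2 := by
        simp [List.length_flatten, List.map_replicate]
        ring
      rw [List.replicate_succ, List.flatten_cons, List.append_assoc, bval_append, ih, hlen]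
      simp only [bval_cons, bval_nil, List.length_cons, List.length_nil]
      rw [show 6 * (n + 1) + 2 = (6 * n + 2) + 6 by ring, pow_add]
      push_cast
      linear_combination ((γ ^ 7 + γ ^ 4) * (-γ) ^ (6 * n + 2)) * hroot

theorem stmt_6 (γ : ℝ) (hγ : 1 < γ) (hroot : γ ^ 3 - γ ^ 2 - γ - 1 = 0)
    (m : ℕ) (L : List ℤ)
    (hL : L = [1, 1, -1, 0, -1] ++ (List.replicate m [(1 : ℤ), 0, 1, -1, 0, -1]).flatten
        ++ [1, -1]) :
    ∑ i ∈ Finset.range L.length, (L.getD i 0 : ℝ) * (-γ) ^ (L.length - 1 - i) = 0 := by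
  have : bval γ L = 0 := by
    rw [hL, List.append_assoc, bval_append, bval_R γ hroot m]
    have hlen : ((List.replicate m [(1 : ℤ), 0, 1, -1, 0, -1]).flatten ++ [(1:ℤ), -1]).length
        = 6 * m + 2 := by
      simp [List.length_flatten, List.map_replicate]
      ring
    rw [hlen]
    ring
  simpa [bval] using this
end

section
/- Let β > 1 be the real root of x^3 - m x^2 - m x - m for an integer m ≥ 1. Then β is a Pisot number: its two other (complex) conjugate roots have absolute value strictly less than 1. -/
/-!
Dividing out the real root, `x³ - m x² - m x - m = (x - β) (x² + b x + c)` with `b = β - m` and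
`c = β² - m β - m = m / β`. Since `m < β`, we get `0 < c < 1`, and `β (b - c) = c` gives
`b < 1 + c`. These are the Schur–Cohn (Jury) conditions `c < 1`, `|b| < 1 + c` under which both
roots of a real quadratic lie in the open unit disc: non-real roots are conjugate with
`|z|² = c`, and real roots `x, y` satisfy `(1 - x) (1 - y) = 1 + b + c > 0`,
`(1 + x) (1 + y) = 1 - b + c > 0` and `x y = c < 1`.
-/

theorem abs_lt_one_of_quadratic_eq_zero {b c x : ℝ} (hc : c < 1) (hb : |b| < 1 + c)
    (hx : x ^ 2 + b * x + c = 0) : |x| < 1 := by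
  obtain ⟨hb₁, hb₂⟩ := abs_lt.mp hb
  refine abs_lt.mpr ⟨?_, ?_⟩
  · by_contra! h
    nlinarith
  · by_contra! h
    nlinarith

theorem Complex.normSq_eq_of_quadratic_eq_zero {b c : ℝ} {z : ℂ} (him : z.im ≠ 0)
    (hz : z ^ 2 + b * z + c = 0) : normSq z = c := by
  have hre := congrArg re hz
  have him' := congrArg im hz
  simp only [pow_two, add_re, add_im, mul_re, mul_im, ofReal_re, ofReal_im, zero_re, zero_im,
    zero_mul, sub_zero, add_zero] at hre him'
  have hsum : 2 * z.re + b = 0 := mul_left_cancel₀ him (by linear_combination him')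
  rw [normSq_apply]
  linear_combination -hre + z.re * hsum

theorem Complex.norm_lt_one_of_quadratic_eq_zero {b c : ℝ} {z : ℂ} (hc : c < 1)
    (hb : |b| < 1 + c) (hz : z ^ 2 + b * z + c = 0) : ‖z‖ < 1 := by
  by_cases him : z.im = 0
  · rw [← re_add_im z, him, ofReal_zero, zero_mul, add_zero] at hz ⊢
    rw [norm_real, Real.norm_eq_abs]
    exact abs_lt_one_of_quadratic_eq_zero hc hb (by exact_mod_cast hz)
  · have hsq : ‖z‖ ^ 2 < 1 := by
      rw [Complex.sq_norm, normSq_eq_of_quadratic_eq_zero him hz]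
      exact hc
    nlinarith [norm_nonneg z]

theorem quadratic_eq_zero_of_cubic_eq_zero {K : Type*} [CommRing K] [IsDomain K] {a β z : K}
    (hβ : β ^ 3 - a * β ^ 2 - a * β - a = 0) (hz : z ^ 3 - a * z ^ 2 - a * z - a = 0)
    (hzβ : z ≠ β) : z ^ 2 + (β - a) * z + (β ^ 2 - a * β - a) = 0 := by
  have hfactor : (z - β) * (z ^ 2 + (β - a) * z + (β ^ 2 - a * β - a)) = 0 := by
    linear_combination hz - hβ
  exact (mul_eq_zero.mp hfactor).resolve_left (sub_ne_zero.mpr hzβ)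

theorem quadratic_factor_coeff_bounds {a β : ℝ} (hβ : 1 < β)
    (hroot : β ^ 3 - a * β ^ 2 - a * β - a = 0) :
    β ^ 2 - a * β - a < 1 ∧ |β - a| < 1 + (β ^ 2 - a * β - a) := by
  set c := β ^ 2 - a * β - a
  have hβc : β * c = a := by linear_combination hroot
  have ha : 0 < a := by nlinarith
  have haβ : a < β := by nlinarith
  have hc₀ : 0 < c := by nlinarith
  have hc₁ : c < 1 := by nlinarith
  have hbc : β * (β - a - c) = c := by linear_combination -hβc
  refine ⟨hc₁, abs_lt.mpr ⟨by linarith, ?_⟩⟩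
  nlinarith

theorem stmt_10_general (m : ℕ) (β : ℝ) (hβ : 1 < β)
    (hroot : β ^ 3 - m * β ^ 2 - m * β - m = 0) :
    ∀ z : ℂ, z ^ 3 - m * z ^ 2 - m * z - m = 0 → z ≠ (β : ℂ) →
      ‖z‖ < 1 := by
  intro z hz hzβ
  obtain ⟨hc, hb⟩ := quadratic_factor_coeff_bounds hβ hroot
  have hβ' : (β : ℂ) ^ 3 - m * (β : ℂ) ^ 2 - m * β - m = 0 := by
    exact_mod_cast congrArg Complex.ofReal hroot
  have hquad := quadratic_eq_zero_of_cubic_eq_zero hβ' hz hzβ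
  exact Complex.norm_lt_one_of_quadratic_eq_zero hc hb (by push_cast; exact hquad)

theorem stmt_10 (m : ℕ) (hm : 1 ≤ m) (β : ℝ) (hβ : 1 < β)
    (hroot : β ^ 3 - m * β ^ 2 - m * β - m = 0) :
    ∀ z : ℂ, z ^ 3 - m * z ^ 2 - m * z - m = 0 → z ≠ (β : ℂ) →
      ‖z‖ < 1 :=
  stmt_10_general m β hβ hroot
end

section
/- Let β > 1 and ℓ = -β/(β+1). For every x ∈ [ℓ, ℓ+1) and every i ≥ 1, the digit x_i = ⌊-β T_{-β}^{i-1}(x) - ℓ⌋ satisfies 0 ≤ x_i ≤ ⌊β⌋, and x = Σ_{i≥1} x_i (-β)^{-i}. -/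
/-!
The orbit `y n = T^[n] x` stays in `[ℓ, ℓ + 1) ⊆ [-1, 1]` and satisfies
`y (n + 1) = -β * y n - dig n`, so `dig n * (-β)^(-(n+1)) = y n * (-β)^(-n) - y (n+1) * (-β)^(-(n+1))`
is a telescoping difference of an absolutely summable sequence and the series sums to `y 0 = x`.
The digit bound holds because `-β * y - ℓ ∈ (0, β]` for `y ∈ [ℓ, ℓ + 1)`.
-/

open Set

lemma sub_floor_sub_mem_Ico (z ℓ : ℝ) : z - ⌊z - ℓ⌋ ∈ Ico ℓ (ℓ + 1) := by
  have h₀ := Int.fract_nonneg (z - ℓ)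
  have h₁ := Int.fract_lt_one (z - ℓ)
  rw [Int.fract] at h₀ h₁
  constructor <;> linarith

section NegBeta

variable {β ℓ y : ℝ}

lemma neg_mul_sub_mem_Ioc (hβ : 0 < β) (hℓ : ℓ = -β / (β + 1)) (hy : y ∈ Ico ℓ (ℓ + 1)) :
    -β * y - ℓ ∈ Ioc 0 β := by
  have hℓβ : ℓ * (β + 1) = -β := by rw [hℓ]; field_simp
  obtain ⟨hℓy, hyℓ⟩ := hy
  constructor <;> nlinarith

lemma abs_le_one_of_mem_Ico (hβ : 0 < β) (hℓ : ℓ = -β / (β + 1)) (hy : y ∈ Ico ℓ (ℓ + 1)) :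
    |y| ≤ 1 := by
  have hℓβ : ℓ * (β + 1) = -β := by rw [hℓ]; field_simp
  obtain ⟨hℓy, hyℓ⟩ := hy
  rw [abs_le]
  constructor <;> nlinarith

end NegBeta

section Expansion

variable {b C : ℝ} {y d : ℕ → ℝ}

lemma summable_mul_zpow_neg (hb : 1 < |b|) (hy : ∀ n, |y n| ≤ C) :
    Summable fun n : ℕ => y n * b ^ (-(n : ℤ)) := by
  have hb₀ : 0 < |b| := by linarith
  refine Summable.of_norm_bounded
    ((summable_geometric_of_lt_one (by positivity) (inv_lt_one_of_one_lt₀ hb)).mul_left C) ?_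
  intro n
  rw [Real.norm_eq_abs, abs_mul, zpow_neg, zpow_natCast, abs_inv, abs_pow, inv_pow]
  exact mul_le_mul_of_nonneg_right (hy n) (by positivity)

lemma hasSum_digit_mul_zpow (hb : 1 < |b|) (hy : ∀ n, |y n| ≤ C)
    (hrec : ∀ n, y (n + 1) = b * y n - d n) :
    HasSum (fun i : ℕ => d i * b ^ (-(i + 1 : ℤ))) (y 0) := by
  have hb₀ : b ≠ 0 := abs_pos.mp (by linarith)
  set f : ℕ → ℝ := fun n => y n * b ^ (-(n : ℤ)) with hf
  have hsum : HasSum f (∑' n, f n) := (summable_mul_zpow_neg hb hy).hasSum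
  have hshift : HasSum (fun n => f (n + 1)) (∑' n, f n - f 0) := by
    simpa using (hasSum_nat_add_iff' 1).mpr hsum
  have htelescope : ∀ i : ℕ, d i * b ^ (-(i + 1 : ℤ)) = f i - f (i + 1) := by
    intro i
    have hpow : b ^ (-(i : ℤ)) = b * b ^ (-(i + 1 : ℤ)) := by
      rw [← zpow_one_add₀ hb₀]; ring_nf
    simp only [hf, hrec, hpow]
    push_cast
    ring
  have hf₀ : f 0 = y 0 := by simp [hf]
  rw [funext htelescope, ← hf₀, ← sub_sub_cancel (∑' n, f n) (f 0)]
  exact hsum.sub hshift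

end Expansion

theorem stmt_13 (β : ℝ) (hβ : 1 < β) (ℓ : ℝ) (hℓ : ℓ = -β / (β + 1))
    (T : ℝ → ℝ) (hT : ∀ x, T x = -β * x - ⌊-β * x - ℓ⌋)
    (x : ℝ) (hx : x ∈ Set.Ico ℓ (ℓ + 1))
    (dig : ℕ → ℤ) (hdig : ∀ i : ℕ, dig i = ⌊-β * T^[i] x - ℓ⌋) :
    (∀ i : ℕ, 0 ≤ dig i ∧ dig i ≤ ⌊β⌋) ∧
    HasSum (fun i : ℕ => (dig i : ℝ) * (-β) ^ (-(i + 1 : ℤ))) x := by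
  have hβ₀ : 0 < β := by linarith
  have horbit : ∀ n, T^[n] x ∈ Ico ℓ (ℓ + 1)
    | 0 => hx
    | n + 1 => by rw [Function.iterate_succ_apply', hT]; exact sub_floor_sub_mem_Ico _ ℓ
  refine ⟨fun i => ?_, ?_⟩
  · obtain ⟨hpos, hle⟩ := neg_mul_sub_mem_Ioc hβ₀ hℓ (horbit i)
    rw [hdig]
    exact ⟨Int.floor_nonneg.mpr hpos.le, Int.floor_le_floor hle⟩
  · have hb : 1 < |-β| := by rwa [abs_neg, abs_of_pos hβ₀]
    simpa using hasSum_digit_mul_zpow (d := fun i => (dig i : ℝ)) hb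
      (fun n => abs_le_one_of_mem_Ico hβ₀ hℓ (horbit n))
      (fun n => by rw [Function.iterate_succ_apply', hT, hdig])
end

section
/- Let γ > 1 be the real root of x^3 - x^2 - x - 1 and let ℓ = -γ/(γ+1). Then the (-γ)-expansion of ℓ is 1 0 1 1 1 1 ⋯ (digit 1, then 0, then 1 repeated): i.e. ⌊-γℓ - ℓ⌋ = 1, and with t = T_{-γ}(ℓ), ⌊-γt - ℓ⌋ = 0, and T_{-γ}^2(ℓ) is a fixed point of T_{-γ} with digit 1. -/
/-!
The point `-1/(γ+1)` is a fixed point of `T_{-γ}` with digit `1` for every `γ ≥ 1`, since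
`-γ · (-1/(γ+1)) - ℓ = 2γ/(γ+1) ∈ [1, 2)`. The Tribonacci equation, in the form `γ(γ² - γ - 1) = 1`,
makes the orbit of `ℓ` land on it after two steps: `ℓ ↦ 1/(γ(γ+1)) ↦ -1/(γ+1)`, with digits `1` and `0`
because `-γℓ - ℓ = γ ∈ [1, 2)` and `-γ T(ℓ) - ℓ = (γ-1)/(γ+1) ∈ [0, 1)`.
-/

open Function

namespace NegBetaTransformation

variable {γ ℓ : ℝ} {T : ℝ → ℝ}

lemma apply_eq_of_floor_eq (hT : ∀ x, T x = -γ * x - ⌊-γ * x - ℓ⌋) {x : ℝ} {d : ℤ}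
    (hd : ⌊-γ * x - ℓ⌋ = d) : T x = -γ * x - d := by
  rw [hT, hd]

lemma floor_neg_inv_succ (hγ : 1 ≤ γ) (hℓ : ℓ = -γ / (γ + 1)) :
    ⌊-γ * (-1 / (γ + 1)) - ℓ⌋ = 1 := by
  have hpos : 0 < γ + 1 := by linarith
  have hval : -γ * (-1 / (γ + 1)) - ℓ = 2 * γ / (γ + 1) := by
    rw [hℓ]; field_simp; ring
  rw [hval, Int.floor_eq_iff, Int.cast_one, le_div_iff₀ hpos, div_lt_iff₀ hpos]
  constructor <;> linarith

lemma isFixedPt_neg_inv_succ (hγ : 1 ≤ γ) (hℓ : ℓ = -γ / (γ + 1))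
    (hT : ∀ x, T x = -γ * x - ⌊-γ * x - ℓ⌋) : IsFixedPt T (-1 / (γ + 1)) := by
  have hne : γ + 1 ≠ 0 := by linarith
  rw [IsFixedPt, apply_eq_of_floor_eq hT (floor_neg_inv_succ hγ hℓ)]
  field_simp
  ring

end NegBetaTransformation

lemma lt_two_of_tribonacci {γ : ℝ} (hγ : 1 < γ) (hroot : γ ^ 3 - γ ^ 2 - γ - 1 = 0) : γ < 2 := by
  nlinarith

open NegBetaTransformation in
theorem stmt_14 (γ : ℝ) (hγ : 1 < γ) (hroot : γ ^ 3 - γ ^ 2 - γ - 1 = 0)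
    (ℓ : ℝ) (hℓ : ℓ = -γ / (γ + 1))
    (T : ℝ → ℝ) (hT : ∀ x, T x = -γ * x - ⌊-γ * x - ℓ⌋) :
    ⌊-γ * ℓ - ℓ⌋ = 1 ∧
    ⌊-γ * T ℓ - ℓ⌋ = 0 ∧
    T (T^[2] ℓ) = T^[2] ℓ ∧
    ⌊-γ * T^[2] ℓ - ℓ⌋ = 1 := by
  have hpos : 0 < γ + 1 := by linarith
  have hγ2 : γ < 2 := lt_two_of_tribonacci hγ hroot
  have hdigit₁ : ⌊-γ * ℓ - ℓ⌋ = 1 := by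
    have hval : -γ * ℓ - ℓ = γ := by rw [hℓ]; field_simp; ring
    rw [hval, Int.floor_eq_iff, Int.cast_one]
    constructor <;> linarith
  have horbit₁ : T ℓ = 1 / (γ * (γ + 1)) := by
    rw [apply_eq_of_floor_eq hT hdigit₁, hℓ]
    field_simp
    linear_combination hroot
  have hdigit₂ : ⌊-γ * T ℓ - ℓ⌋ = 0 := by
    have hval : -γ * T ℓ - ℓ = (γ - 1) / (γ + 1) := by rw [horbit₁, hℓ]; field_simp; ring
    rw [hval, Int.floor_eq_iff, Int.cast_zero, zero_add, div_lt_iff₀ hpos]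
    exact ⟨div_nonneg (by linarith) hpos.le, by linarith⟩
  have horbit₂ : T^[2] ℓ = -1 / (γ + 1) := by
    change T (T ℓ) = _
    rw [apply_eq_of_floor_eq hT hdigit₂, horbit₁]
    field_simp
    ring
  rw [horbit₂]
  exact ⟨hdigit₁, hdigit₂, isFixedPt_neg_inv_succ hγ.le hℓ hT, floor_neg_inv_succ hγ.le hℓ⟩
end

section
/- Let γ be the Tribonacci constant. If x and y are real numbers each representable as Σ_{i=0}^{K} d_i (-γ)^i with digits d_i ∈ {0,1} (i.e. x, y are (-γ)-integers in the representational sense), then x + y is representable as Σ_{i=-6}^{K'} e_i (-γ)^i with digits e_i ∈ {0,1}, i.e. at most 6 fractional digits suffice. -/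
/-!
Adding two digit strings digitwise gives digits in {0, 1, 2}. These are read from the most
significant end by a transducer whose state is a carry `a + b β + c β²` in `ℤ[β]`, `β = -γ`:
at each step the carry is multiplied by `β`, the next input digit is added, and a digit
`e ∈ {0, 1}` is emitted five places higher, i.e. `e β⁵` is subtracted. Choosing `e` so that
the carry stays in a bounded window (the conjugates of `β` have modulus `< 1`, so only the
real embedding needs steering), only 126 carries ever occur. Feeding eleven further zero digits
drives each of them to `0`, which writes the final carry with digits in the positions `-6, …, 4`.
-/

open Finset

theorem Finset.sum_range_eq_sum_range_ite {M : Type*} [AddCommMonoid M] {n N : ℕ} (h : n ≤ N)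
    (f : ℕ → M) : ∑ i ∈ range n, f i = ∑ i ∈ range N, if i < n then f i else 0 := by
  rw [← sum_filter]
  congr 1
  ext i
  simp only [mem_range, mem_filter]
  omega

theorem pow_mul_sum_Icc_eq_sum_range {K : Type*} [Field K] {β : K} (hβ : β ≠ 0) (f : ℕ → K)
    (a m : ℕ) :
    β ^ a * ∑ j ∈ Icc (-a : ℤ) m, f (j + a).toNat * β ^ j =
      ∑ i ∈ range (m + a + 1), f i * β ^ i := by
  rw [Int.Icc_eq_finset_map, sum_map, show ((m : ℤ) + 1 - -a).toNat = m + a + 1 by omega,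
    mul_sum]
  refine sum_congr rfl fun i _ ↦ ?_
  simp only [Function.Embedding.trans_apply, Nat.castEmbedding_apply, addLeftEmbedding_apply,
    show (-(a : ℤ) + i + a).toNat = i by omega, zpow_add₀ hβ, zpow_neg, zpow_natCast]
  field_simp

abbrev Carry := ℤ × ℤ × ℤ

namespace Carry

/-- `(a, b, c)` stands for `a + b β + c β²`. -/
noncomputable def eval {R : Type*} [CommRing R] (β : R) (q : Carry) : R :=
  q.1 + q.2.1 * β + q.2.2 * β ^ 2

/-- The carry `β q + d - e β⁵`, reduced with `β³ = -β² + β - 1`. -/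
def step : Carry → ℤ → ℤ → Carry
  | (a, b, c), d, e => (-c + d + 2 * e, a + c - 3 * e, b - c + 4 * e)

/-- Emit `1` when the new carry would be too negative; its value is estimated at `β ≈ -2`. -/
def digit (q : Carry) (d : ℤ) : ℤ :=
  match q.step d 0 with
  | (a, b, c) => if a - 2 * b + 4 * c < -7 then 1 else 0

def next (q : Carry) (d : ℤ) : Carry := q.step d (q.digit d)

def run (c : ℕ → ℤ) : ℕ → Carry → Carry
  | 0, q => q
  | n + 1, q => run c n (q.next (c n))

/-- The carries reachable from `0` with input digits in `{0, 1, 2}`. -/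
def reachable : List Carry :=
  [(-2, 1, 0), (-2, 1, 1), (-2, 2, 0), (-2, 2, 1), (-2, 3, 1), (-1, -1, 0), (-1, -1, 1),
    (-1, -1, 2), (-1, -1, 3), (-1, 0, -1), (-1, 0, 0), (-1, 0, 1), (-1, 0, 2), (-1, 0, 3),
    (-1, 1, -1), (-1, 1, 0), (-1, 1, 1), (-1, 1, 2), (-1, 1, 3), (-1, 2, 0), (-1, 2, 1),
    (-1, 2, 2), (-1, 2, 3), (-1, 3, 0), (-1, 3, 1), (-1, 3, 2), (-1, 4, 1), (0, -2, 1), (0, -2, 2),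
    (0, -2, 3), (0, -1, -1), (0, -1, 0), (0, -1, 1), (0, -1, 2), (0, -1, 3), (0, 0, -1), (0, 0, 0),
    (0, 0, 1), (0, 0, 2), (0, 0, 3), (0, 0, 4), (0, 1, -1), (0, 1, 0), (0, 1, 1), (0, 1, 2),
    (0, 1, 3), (0, 1, 4), (0, 2, 0), (0, 2, 1), (0, 2, 2), (0, 2, 3), (0, 3, 0), (0, 3, 1),
    (0, 3, 2), (0, 4, 1), (1, -3, 2), (1, -2, 1), (1, -2, 2), (1, -1, -1), (1, -1, 0), (1, -1, 1),
    (1, -1, 2), (1, -1, 3), (1, 0, -2), (1, 0, -1), (1, 0, 0), (1, 0, 1), (1, 0, 2), (1, 0, 3),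
    (1, 1, -1), (1, 1, 0), (1, 1, 1), (1, 1, 2), (1, 1, 3), (1, 1, 4), (1, 2, -1), (1, 2, 0),
    (1, 2, 1), (1, 2, 2), (1, 2, 3), (1, 3, 0), (1, 3, 1), (1, 3, 2), (1, 4, 0), (1, 4, 1),
    (2, -3, 2), (2, -2, 1), (2, -2, 2), (2, -1, -1), (2, -1, 0), (2, -1, 1), (2, -1, 2),
    (2, -1, 3), (2, 0, -1), (2, 0, 0), (2, 0, 1), (2, 0, 2), (2, 0, 3), (2, 1, -1), (2, 1, 0),
    (2, 1, 1), (2, 1, 2), (2, 1, 3), (2, 1, 4), (2, 2, -1), (2, 2, 0), (2, 2, 1), (2, 2, 2),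
    (2, 2, 3), (2, 3, 0), (2, 3, 1), (3, -2, 1), (3, -2, 2), (3, -1, 0), (3, -1, 1), (3, -1, 2),
    (3, 0, 0), (3, 0, 1), (3, 0, 2), (3, 0, 3), (3, 1, 0), (3, 1, 1), (3, 1, 2), (3, 1, 3),
    (4, -1, 2), (4, 0, 3)]

set_option maxRecDepth 10000 in
theorem next_mem_reachable :
    ∀ q ∈ reachable, ∀ d ∈ [(0 : ℤ), 1, 2], q.next d ∈ reachable := by
  decide

set_option maxRecDepth 10000 in
theorem run_eleven_zeros : ∀ q ∈ reachable, run (fun _ ↦ 0) 11 q = 0 := by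
  decide

theorem run_mem_reachable (c : ℕ → ℤ) (hc : ∀ i, 0 ≤ c i ∧ c i ≤ 2) (n : ℕ) :
    ∀ q ∈ reachable, run c n q ∈ reachable := by
  induction n with
  | zero => exact fun q hq ↦ hq
  | succ n ih =>
    intro q hq
    refine ih _ (next_mem_reachable q hq (c n) ?_)
    have := hc n
    simp only [List.mem_cons, List.not_mem_nil, or_false]
    omega

theorem digit_eq_zero_or_one (q : Carry) (d : ℤ) : q.digit d = 0 ∨ q.digit d = 1 := by
  unfold digit
  split
  split_ifs <;> simp

section CommRing

variable {R : Type*} [CommRing R] {β : R}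

theorem eval_step (hβ : β ^ 3 + β ^ 2 - β + 1 = 0) (q : Carry) (d e : ℤ) :
    (q.step d e).eval β = β * q.eval β + d - e * β ^ 5 := by
  obtain ⟨a, b, c⟩ := q
  simp only [step, eval]
  push_cast
  linear_combination (e * (β ^ 2 - β + 2) - c) * hβ

theorem eval_run (hβ : β ^ 3 + β ^ 2 - β + 1 = 0) (c : ℕ → ℤ) (n : ℕ) (q : Carry) :
    ∃ E : ℕ → ℤ, (∀ i, E i = 0 ∨ E i = 1) ∧
      β ^ n * q.eval β + ∑ i ∈ range n, (c i : R) * β ^ i =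
        ∑ i ∈ range n, (E i : R) * β ^ (i + 5) + (run c n q).eval β := by
  induction n generalizing q with
  | zero => exact ⟨fun _ ↦ 0, fun _ ↦ Or.inl rfl, by simp [run]⟩
  | succ n ih =>
    obtain ⟨E, hE, hsum⟩ := ih (q.next (c n))
    have hstep : (q.next (c n)).eval β = β * q.eval β + c n - q.digit (c n) * β ^ 5 :=
      eval_step hβ q (c n) (q.digit (c n))
    refine ⟨Function.update E n (q.digit (c n)), fun i ↦ ?_, ?_⟩
    · rcases eq_or_ne i n with rfl | hi
      · simpa using digit_eq_zero_or_one q (c i)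
      · simpa [Function.update_of_ne hi] using hE i
    · have hlow :
          ∑ i ∈ range n, (Function.update E n (q.digit (c n)) i : R) * β ^ (i + 5) =
            ∑ i ∈ range n, (E i : R) * β ^ (i + 5) :=
        sum_congr rfl fun i hi ↦ by
          rw [Function.update_of_ne (mem_range.mp hi).ne]
      rw [sum_range_succ, sum_range_succ, Function.update_self, hlow, run]
      linear_combination hsum - β ^ n * hstep

theorem exists_pow_eleven_mul_eval_eq (hβ : β ^ 3 + β ^ 2 - β + 1 = 0) {q : Carry}
    (hq : q ∈ reachable) :
    ∃ F : ℕ → ℤ, (∀ i, F i = 0 ∨ F i = 1) ∧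
      β ^ 11 * q.eval β = ∑ i ∈ range 11, (F i : R) * β ^ (i + 5) := by
  obtain ⟨F, hF, h⟩ := eval_run hβ (fun _ ↦ 0) 11 q
  rw [run_eleven_zeros q hq] at h
  exact ⟨F, hF, by simpa [eval] using h⟩

end CommRing

end Carry

theorem exists_pow_eleven_mul_sum_eq {R : Type*} [CommRing R] {β : R}
    (hβ : β ^ 3 + β ^ 2 - β + 1 = 0) (c : ℕ → ℤ) (hc : ∀ i, 0 ≤ c i ∧ c i ≤ 2)
    (n : ℕ) :
    ∃ G : ℕ → ℤ, (∀ i, G i = 0 ∨ G i = 1) ∧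
      β ^ 11 * ∑ i ∈ range n, (c i : R) * β ^ i =
        β ^ 5 * ∑ i ∈ range (11 + n), (G i : R) * β ^ i := by
  obtain ⟨E, hE, hrun⟩ := Carry.eval_run hβ c n 0
  obtain ⟨F, hF, hflush⟩ :=
    Carry.exists_pow_eleven_mul_eval_eq hβ (Carry.run_mem_reachable c hc n 0 (by decide))
  refine ⟨fun i ↦ if i < 11 then F i else E (i - 11), fun i ↦ ?_, ?_⟩
  · dsimp only
    split_ifs
    exacts [hF i, hE (i - 11)]
  rw [show Carry.eval β 0 = 0 by simp [Carry.eval], mul_zero, zero_add] at hrun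
  rw [hrun, mul_add, hflush, add_comm, sum_range_add, mul_add]
  congr 1 <;> simp only [mul_sum] <;> refine sum_congr rfl fun i hi ↦ ?_
  · simp only [mem_range.mp hi, if_true]
    ring
  · simp only [Nat.add_sub_cancel_left, show ¬11 + i < 11 by omega, if_false]
    ring

theorem exists_binary_expansion_of_digits_le_two {K : Type*} [Field K] {β : K}
    (hβ : β ^ 3 + β ^ 2 - β + 1 = 0) (c : ℕ → ℤ) (hc : ∀ i, 0 ≤ c i ∧ c i ≤ 2)
    (n : ℕ) :
    ∃ (m : ℕ) (e : ℤ → ℤ), (∀ i, e i = 0 ∨ e i = 1) ∧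
      ∑ i ∈ range n, (c i : K) * β ^ i = ∑ i ∈ Icc (-6 : ℤ) m, (e i : K) * β ^ i := by
  have hβ0 : β ≠ 0 := by
    rintro rfl
    norm_num at hβ
  obtain ⟨G, hG, hsum⟩ := exists_pow_eleven_mul_sum_eq hβ c hc n
  refine ⟨n + 4, fun j ↦ G (j + 6).toNat, fun j ↦ hG _, ?_⟩
  apply mul_left_cancel₀ (pow_ne_zero 11 hβ0)
  rw [hsum, show 11 = 5 + 6 from rfl, pow_add, mul_assoc, show 11 + n = n + 4 + 6 + 1 by omega,
    ← pow_mul_sum_Icc_eq_sum_range hβ0 _ 6 (n + 4)]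
  simp

theorem stmt_18_general (γ : ℝ) (hroot : γ ^ 3 - γ ^ 2 - γ - 1 = 0)
    (x y : ℝ) (K₁ K₂ : ℕ) (d₁ d₂ : ℕ → ℤ)
    (hd₁ : ∀ i, d₁ i = 0 ∨ d₁ i = 1) (hd₂ : ∀ i, d₂ i = 0 ∨ d₂ i = 1)
    (hx : x = ∑ i ∈ Finset.range (K₁ + 1), (d₁ i : ℝ) * (-γ) ^ i)
    (hy : y = ∑ i ∈ Finset.range (K₂ + 1), (d₂ i : ℝ) * (-γ) ^ i) :
    ∃ (K' : ℕ) (e : ℤ → ℤ),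
      (∀ i : ℤ, e i = 0 ∨ e i = 1) ∧
      x + y = ∑ i ∈ Finset.Icc (-6 : ℤ) (K' : ℤ), (e i : ℝ) * (-γ) ^ i := by
  set N := K₁ + K₂ + 1
  set c : ℕ → ℤ := fun i ↦
    (if i < K₁ + 1 then d₁ i else 0) + (if i < K₂ + 1 then d₂ i else 0)
  have hc : ∀ i, 0 ≤ c i ∧ c i ≤ 2 := fun i ↦ by
    have := hd₁ i
    have := hd₂ i
    simp only [c]
    split_ifs <;> omega
  obtain ⟨m, e, he, hsum⟩ :=
    exists_binary_expansion_of_digits_le_two (β := -γ) (by linear_combination -hroot) c hc N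
  refine ⟨m, e, he, ?_⟩
  rw [hx, hy, sum_range_eq_sum_range_ite (show K₁ + 1 ≤ N by omega),
    sum_range_eq_sum_range_ite (show K₂ + 1 ≤ N by omega), ← sum_add_distrib, ← hsum]
  refine sum_congr rfl fun i _ ↦ ?_
  simp only [c]
  split_ifs <;> push_cast <;> ring

theorem stmt_18 (γ : ℝ) (hγ : 1 < γ) (hroot : γ ^ 3 - γ ^ 2 - γ - 1 = 0)
    (x y : ℝ) (K₁ K₂ : ℕ) (d₁ d₂ : ℕ → ℤ)
    (hd₁ : ∀ i, d₁ i = 0 ∨ d₁ i = 1) (hd₂ : ∀ i, d₂ i = 0 ∨ d₂ i = 1)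
    (hx : x = ∑ i ∈ Finset.range (K₁ + 1), (d₁ i : ℝ) * (-γ) ^ i)
    (hy : y = ∑ i ∈ Finset.range (K₂ + 1), (d₂ i : ℝ) * (-γ) ^ i) :
    ∃ (K' : ℕ) (e : ℤ → ℤ),
      (∀ i : ℤ, e i = 0 ∨ e i = 1) ∧
      x + y = ∑ i ∈ Finset.Icc (-6 : ℤ) (K' : ℤ), (e i : ℝ) * (-γ) ^ i :=
  stmt_18_general γ hroot x y K₁ K₂ d₁ d₂ hd₁ hd₂ hx hy
end
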